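/- arXiv:2309.03361 — 5 statements merged into one kernel-verified Lean document; each statement's English description precedes it below -/
import Mathlib

section
/- Let X be a nonempty compact convex subset of ℝⁿ and let c ∈ ℝⁿ. Then for every starting point x⁰ ∈ ℝⁿ, the support-function value (X)_c := min_{x ∈ X} c·x satisfies (X)_c = lim_{τ → ∞} c · P_X(x⁰ − τ c), where P_X denotes the metric (orthogonal) projection onto X. -/
set_option maxHeartbeats 1000000


open scoped RealInnerProductSpace
open Filter

/-- Let `X` be a nonempty compact convex subset of `ℝⁿ` and `c ∈ ℝⁿ`.
Then for every starting point `x⁰`, the support-function value `(X)_c = min_{x ∈ X} c·x`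
satisfies `(X)_c = lim_{τ → ∞} c · P_X(x⁰ − τ c)`, where `P_X` is the metric projection
onto `X` (here given as a function `P` of `τ`, characterized as the distance minimizer). -/
theorem support_value_eq_lim_inner_projection
    (n : ℕ) (X : Set (EuclideanSpace ℝ (Fin n)))
    (hXne : X.Nonempty) (hXcomp : IsCompact X) (hXconv : Convex ℝ X)
    (c x0 : EuclideanSpace ℝ (Fin n))
    (P : ℝ → EuclideanSpace ℝ (Fin n))
    (hP : ∀ τ : ℝ, P τ ∈ X ∧ ∀ z ∈ X, dist (x0 - τ • c) (P τ) ≤ dist (x0 - τ • c) z) :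
    Tendsto (fun τ : ℝ => ⟪c, P τ⟫) atTop (nhds (sInf ((fun x => ⟪c, x⟫) '' X))) := by
  -- continuous function ⟪c, ·⟫
  have hf : Continuous fun x : EuclideanSpace ℝ (Fin n) => ⟪c, x⟫ :=
    continuous_const.inner continuous_id
  obtain ⟨xs, hxsX, hxs⟩ := hXcomp.exists_isMinOn hXne hf.continuousOn
  set m := sInf ((fun x => ⟪c, x⟫) '' X) with hm
  have hmin : ∀ z ∈ X, m ≤ ⟪c, z⟫ := by
    intro z hz
    apply csInf_le
    · exact (hXcomp.image hf).bddBelow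
    · exact ⟨z, hz, rfl⟩
  have hmeq : ⟪c, xs⟫ = m := le_antisymm
    (le_csInf ((hXne.image _)) (by rintro b ⟨z, hz, rfl⟩; exact hxs hz)) (hmin xs hxsX)
  -- bound on X
  obtain ⟨R, hR⟩ := hXcomp.isBounded.exists_norm_le
  -- variational inequality
  have hvar : ∀ τ : ℝ, ∀ z ∈ X, ⟪(x0 - τ • c) - P τ, z - P τ⟫ ≤ 0 := by
    intro τ z hz
    have hPτ := (hP τ).1
    have heq : ‖(x0 - τ • c) - P τ‖ = ⨅ w : X, ‖(x0 - τ • c) - w‖ := by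
      haveI : Nonempty X := ⟨⟨P τ, hPτ⟩⟩
      have h1 : ‖(x0 - τ • c) - P τ‖ ≤ ⨅ w : X, ‖(x0 - τ • c) - w‖ := by
        apply le_ciInf
        intro w
        simpa [dist_eq_norm] using (hP τ).2 w w.2
      have h2 : (⨅ w : X, ‖(x0 - τ • c) - w‖) ≤ ‖(x0 - τ • c) - P τ‖ := by
        apply ciInf_le _ (⟨P τ, hPτ⟩ : X)
        refine ⟨0, ?_⟩
        rintro b ⟨w, rfl⟩
        exact norm_nonneg _
      linarith
    exact (norm_eq_iInf_iff_real_inner_le_zero hXconv hPτ).1 heq z hz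
  -- key bound  ⟪c, P τ⟫ ≤ m + C/τ  for τ > 0
  set C : ℝ := (‖x0‖ + R) * (2 * R) with hC
  have hCnn : 0 ≤ C := by
    have hR0 : 0 ≤ R := le_trans (norm_nonneg _) (hR xs hxsX)
    positivity
  have hupper : ∀ τ : ℝ, 0 < τ → ⟪c, P τ⟫ ≤ m + C / τ := by
    intro τ hτ
    have h1 := hvar τ xs hxsX
    -- ⟪x0 - τ c - Pτ, xs - Pτ⟫ ≤ 0
    have h2 : τ * ⟪c, P τ - xs⟫ ≤ ⟪P τ - x0, xs - P τ⟫ := by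
      have expand : ⟪(x0 - τ • c) - P τ, xs - P τ⟫
          = ⟪x0 - P τ, xs - P τ⟫ - τ * ⟪c, xs - P τ⟫ := by
        have h0 : (x0 - τ • c) - P τ = (x0 - P τ) - τ • c := by abel
        rw [h0, inner_sub_left, real_inner_smul_left]
      rw [expand] at h1
      have hn1 : ⟪c, P τ - xs⟫ = - ⟪c, xs - P τ⟫ := by
        rw [← inner_neg_right]; congr 1; abel
      have hn2 : ⟪P τ - x0, xs - P τ⟫ = - ⟪x0 - P τ, xs - P τ⟫ := by
        rw [← inner_neg_left]; congr 1; abel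
      rw [hn1, hn2, mul_neg]
      linarith
    have hbound : ⟪P τ - x0, xs - P τ⟫ ≤ C := by
      calc ⟪P τ - x0, xs - P τ⟫ ≤ ‖P τ - x0‖ * ‖xs - P τ‖ := real_inner_le_norm _ _
        _ ≤ (‖x0‖ + R) * (2 * R) := by
            have h3 : ‖P τ - x0‖ ≤ ‖x0‖ + R :=
              (norm_sub_le _ _).trans (by linarith [hR _ (hP τ).1])
            have h4 : ‖xs - P τ‖ ≤ 2 * R :=
              (norm_sub_le _ _).trans (by linarith [hR _ (hP τ).1, hR _ hxsX])
            have h5 : 0 ≤ ‖xs - P τ‖ := norm_nonneg _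
            nlinarith [norm_nonneg (P τ - x0)]
    have h6 : τ * ⟪c, P τ - xs⟫ ≤ C := le_trans h2 hbound
    have h7 : ⟪c, P τ - xs⟫ = ⟪c, P τ⟫ - ⟪c, xs⟫ := inner_sub_right _ _ _
    rw [h7] at h6
    rw [← hmeq]
    have h8 : ⟪c, P τ⟫ - ⟪c, xs⟫ ≤ C / τ := by
      rw [le_div_iff₀ hτ]; linarith
    linarith
  -- squeeze
  have hlow : ∀ᶠ τ : ℝ in atTop, m ≤ ⟪c, P τ⟫ :=
    Eventually.of_forall fun τ => hmin _ (hP τ).1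
  have hup : ∀ᶠ τ : ℝ in atTop, ⟪c, P τ⟫ ≤ m + C / τ := by
    filter_upwards [eventually_gt_atTop 0] with τ hτ using hupper τ hτ
  have htendsto : Tendsto (fun τ : ℝ => m + C / τ) atTop (nhds m) := by
    have : Tendsto (fun τ : ℝ => C / τ) atTop (nhds 0) :=
      Tendsto.div_atTop tendsto_const_nhds tendsto_id
    simpa using tendsto_const_nhds.add this
  exact tendsto_of_tendsto_of_tendsto_of_le_of_le' tendsto_const_nhds htendsto hlow hup
end

section
/- Let X = {x ∈ ℝⁿ : A x ≤ b} be a nonempty bounded polyhedron (A an m×n real matrix, b ∈ ℝᵐ, the inequality componentwise), and let c ∈ ℝⁿ. Suppose the linear program min_{x ∈ X} c·x has a unique optimal solution x⋆. Then for every x⁰ ∈ ℝⁿ there exists θ_c > 0 such that P_X(x⁰ − θ c) = x⋆ for all θ ≥ θ_c, where P_X is the metric projection onto X. -/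
open scoped RealInnerProductSpace
open Filter Topology

/-!
At the unique minimizer `x⋆` of a linear functional `g` over a polyhedron `X`, every feasible
direction (a direction `u` keeping the active constraints, `f i u ≤ 0` whenever `f i x⋆ = b i`)
strictly increases `g`, otherwise `x⋆ + t u` would be a second minimizer. The feasible directions
form a closed cone containing `X - x⋆`, so compactness of its unit sphere gives a sharp minimum
`ε ‖z - x⋆‖ ≤ g (z - x⋆)` on `X`. For `g = ⟪c, ·⟫` and `θ ε ≥ ‖x⁰ - x⋆‖` this makes the angle
at `x⋆` between `x⁰ - θ c` and any `z ∈ X` obtuse, so `x⋆` is the point of `X` nearest to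
`x⁰ - θ c`.
-/

section Polyhedron

variable {E ι : Type*} [NormedAddCommGroup E] [NormedSpace ℝ E]

def polyhedron (f : ι → E →L[ℝ] ℝ) (b : ι → ℝ) : Set E :=
  {x | ∀ i, f i x ≤ b i}

def feasibleCone (f : ι → E →L[ℝ] ℝ) (b : ι → ℝ) (x : E) : Set E :=
  {u | ∀ i, f i x = b i → f i u ≤ 0}

variable {f : ι → E →L[ℝ] ℝ} {b : ι → ℝ} {x : E}

theorem isClosed_feasibleCone : IsClosed (feasibleCone f b x) := by
  simp only [feasibleCone, Set.ofPred_forall]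
  exact isClosed_iInter fun i => isClosed_iInter fun _ =>
    isClosed_le (f i).continuous continuous_const

theorem smul_mem_feasibleCone {u : E} (hu : u ∈ feasibleCone f b x) {t : ℝ} (ht : 0 ≤ t) :
    t • u ∈ feasibleCone f b x := fun i hi => by
  simpa only [map_smul, smul_eq_mul] using mul_nonpos_of_nonneg_of_nonpos ht (hu i hi)

theorem sub_mem_feasibleCone {z : E} (hz : z ∈ polyhedron f b) :
    z - x ∈ feasibleCone f b x := fun i hi => by
  simpa [hi] using hz i

theorem eventually_add_smul_mem_polyhedron [Finite ι] (hx : x ∈ polyhedron f b) {u : E}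
    (hu : u ∈ feasibleCone f b x) : ∀ᶠ t in 𝓝[>] (0 : ℝ), x + t • u ∈ polyhedron f b := by
  refine eventually_all.2 fun i => ?_
  have hxu : ∀ t : ℝ, f i (x + t • u) = f i x + t * f i u := fun t => by
    rw [map_add, map_smul, smul_eq_mul]
  rcases (hx i).eq_or_lt with hact | hslack
  · filter_upwards [self_mem_nhdsWithin] with t (ht : 0 < t)
    rw [hxu, hact]
    linarith [mul_nonpos_of_nonneg_of_nonpos ht.le (hu i hact)]
  · have hcont : Continuous fun t : ℝ => f i x + t * f i u := by fun_prop
    have hlim := hcont.tendsto 0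
    simp only [zero_mul, add_zero] at hlim
    filter_upwards [nhdsWithin_le_nhds (hlim.eventually (eventually_lt_nhds hslack))] with t ht
    rw [hxu]
    exact ht.le

theorem pos_of_mem_feasibleCone [Finite ι] {g : E →L[ℝ] ℝ} (hx : x ∈ polyhedron f b)
    (hmin : ∀ y ∈ polyhedron f b, g x ≤ g y)
    (huniq : ∀ y ∈ polyhedron f b, g y = g x → y = x)
    {u : E} (hu : u ∈ feasibleCone f b x) (hu0 : u ≠ 0) : 0 < g u := by
  obtain ⟨t, hmem, ht⟩ :=
    ((eventually_add_smul_mem_polyhedron hx hu).and self_mem_nhdsWithin).exists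
  have ht : (0 : ℝ) < t := ht
  have hg : g (x + t • u) = g x + t * g u := by rw [map_add, map_smul, smul_eq_mul]
  have hgu : 0 ≤ g u := nonneg_of_mul_nonneg_right (by linarith [hmin _ hmem]) ht
  refine hgu.lt_of_ne fun h => hu0 ?_
  have hxtu := huniq _ hmem (by rw [hg, ← h, mul_zero, add_zero])
  simpa [ht.ne'] using hxtu

end Polyhedron

theorem exists_pos_mul_norm_le_of_pos_on_cone {E : Type*} [NormedAddCommGroup E]
    [NormedSpace ℝ E] [ProperSpace E] {K : Set E} (hK : IsClosed K)
    (hKsmul : ∀ u ∈ K, ∀ t : ℝ, 0 ≤ t → t • u ∈ K) {g : E →L[ℝ] ℝ}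
    (hg : ∀ u ∈ K, u ≠ 0 → 0 < g u) : ∃ ε > 0, ∀ u ∈ K, ε * ‖u‖ ≤ g u := by
  have hS : IsCompact (K ∩ Metric.sphere 0 1) := (isCompact_sphere 0 1).inter_left hK
  obtain ⟨ε, hε, hεS⟩ := hS.exists_forall_le' g.continuous.continuousOn
    fun u hu => hg u hu.1 (ne_zero_of_mem_unit_sphere ⟨u, hu.2⟩)
  refine ⟨ε, hε, fun u hu => ?_⟩
  rcases eq_or_ne u 0 with rfl | hu0
  · simp
  have hnorm : 0 < ‖u‖ := norm_pos_iff.2 hu0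
  have hunit : ‖u‖⁻¹ • u ∈ K ∩ Metric.sphere 0 1 :=
    ⟨hKsmul u hu _ (inv_nonneg.2 hnorm.le), by
      rw [mem_sphere_zero_iff_norm, norm_smul, norm_inv, norm_norm, inv_mul_cancel₀ hnorm.ne']⟩
  have := hεS _ hunit
  rwa [map_smul, smul_eq_mul, le_inv_mul_iff₀ hnorm, mul_comm] at this

theorem exists_pos_mul_norm_sub_le_of_unique_min_polyhedron {E ι : Type*}
    [NormedAddCommGroup E] [NormedSpace ℝ E] [ProperSpace E] [Finite ι]
    {f : ι → E →L[ℝ] ℝ} {b : ι → ℝ} {g : E →L[ℝ] ℝ} {x : E} (hx : x ∈ polyhedron f b)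
    (hmin : ∀ y ∈ polyhedron f b, g x ≤ g y)
    (huniq : ∀ y ∈ polyhedron f b, g y = g x → y = x) :
    ∃ ε > 0, ∀ z ∈ polyhedron f b, ε * ‖z - x‖ ≤ g (z - x) := by
  obtain ⟨ε, hε, hcone⟩ := exists_pos_mul_norm_le_of_pos_on_cone isClosed_feasibleCone
    (fun u hu t ht => smul_mem_feasibleCone hu ht)
    (fun u hu hu0 => pos_of_mem_feasibleCone hx hmin huniq hu hu0)
  exact ⟨ε, hε, fun z hz => hcone _ (sub_mem_feasibleCone hz)⟩

theorem norm_sub_le_norm_sub_of_inner_nonpos {F : Type*} [NormedAddCommGroup F]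
    [InnerProductSpace ℝ F] {p x z : F} (h : ⟪p - x, z - x⟫ ≤ 0) : ‖p - x‖ ≤ ‖p - z‖ := by
  have hexp := norm_sub_sq_real (p - x) (z - x)
  rw [sub_sub_sub_cancel_right] at hexp
  exact (sq_le_sq₀ (norm_nonneg _) (norm_nonneg _)).1 (by nlinarith [sq_nonneg ‖z - x‖])

theorem exists_forall_dist_le_of_sharp_min {F : Type*} [NormedAddCommGroup F]
    [InnerProductSpace ℝ F] {X : Set F} {c x : F} {ε : ℝ} (hε : 0 < ε)
    (hsharp : ∀ z ∈ X, ε * ‖z - x‖ ≤ ⟪c, z - x⟫) (p : F) :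
    ∃ θc : ℝ, 0 < θc ∧ ∀ θ : ℝ, θc ≤ θ → ∀ z ∈ X, dist (p - θ • c) x ≤ dist (p - θ • c) z := by
  refine ⟨‖p - x‖ / ε + 1, by positivity, fun θ hθ z hz => ?_⟩
  have hθε : ‖p - x‖ ≤ θ * ε := (div_le_iff₀ hε).1 (by linarith)
  have hθ : 0 ≤ θ := by linarith [div_nonneg (norm_nonneg (p - x)) hε.le]
  have hobtuse : ⟪p - θ • c - x, z - x⟫ ≤ 0 := by
    rw [sub_right_comm, inner_sub_left, real_inner_smul_left]
    calc ⟪p - x, z - x⟫ - θ * ⟪c, z - x⟫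
        ≤ ‖p - x‖ * ‖z - x‖ - θ * (ε * ‖z - x‖) := by
          gcongr
          · exact real_inner_le_norm _ _
          · exact hsharp z hz
      _ ≤ 0 := by nlinarith [norm_nonneg (z - x)]
  rw [dist_eq_norm, dist_eq_norm]
  exact norm_sub_le_norm_sub_of_inner_nonpos hobtuse

theorem projection_solves_lp_general
    (m n : ℕ) (A : Matrix (Fin m) (Fin n) ℝ) (b : Fin m → ℝ)
    (X : Set (EuclideanSpace ℝ (Fin n)))
    (hX : X = {x : EuclideanSpace ℝ (Fin n) | A.mulVec x ≤ b})
    (c xstar : EuclideanSpace ℝ (Fin n))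
    (hopt : xstar ∈ X ∧ ∀ y ∈ X, ⟪c, xstar⟫ ≤ ⟪c, y⟫)
    (huniq : ∀ y ∈ X, ⟪c, y⟫ = ⟪c, xstar⟫ → y = xstar)
    (x0 : EuclideanSpace ℝ (Fin n)) :
    ∃ θc : ℝ, 0 < θc ∧ ∀ θ : ℝ, θc ≤ θ →
      ∀ z ∈ X, dist (x0 - θ • c) xstar ≤ dist (x0 - θ • c) z := by
  let rows : Fin m → EuclideanSpace ℝ (Fin n) →L[ℝ] ℝ := fun i =>
    (EuclideanSpace.proj i).comp (LinearMap.toContinuousLinearMap (Matrix.toLpLin 2 2 A))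
  have hXpoly : X = polyhedron rows b := by
    ext x
    simp [hX, polyhedron, rows, Pi.le_def]
  subst hXpoly
  obtain ⟨ε, hε, hsharp⟩ := exists_pos_mul_norm_sub_le_of_unique_min_polyhedron
    (g := innerSL ℝ c) hopt.1 hopt.2 huniq
  exact exists_forall_dist_le_of_sharp_min hε hsharp x0

/-- Let `X = {x : A x ≤ b}` be a nonempty bounded polyhedron and `c ∈ ℝⁿ`.
If the linear program `min_{x ∈ X} c·x` has a unique optimal solution `x⋆`, then for every
`x⁰` there is `θ_c > 0` such that the metric projection of `x⁰ − θ c` onto `X` is `x⋆`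
for all `θ ≥ θ_c` (expressed: `x⋆` minimizes the distance to `x⁰ − θ c` over `X`; since
`X` is closed and convex this says exactly `P_X(x⁰ − θ c) = x⋆`). -/
theorem projection_solves_lp
    (m n : ℕ) (A : Matrix (Fin m) (Fin n) ℝ) (b : Fin m → ℝ)
    (X : Set (EuclideanSpace ℝ (Fin n)))
    (hX : X = {x : EuclideanSpace ℝ (Fin n) | A.mulVec x ≤ b})
    (hXbdd : Bornology.IsBounded X)
    (c xstar : EuclideanSpace ℝ (Fin n))
    (hopt : xstar ∈ X ∧ ∀ y ∈ X, ⟪c, xstar⟫ ≤ ⟪c, y⟫)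
    (huniq : ∀ y ∈ X, ⟪c, y⟫ = ⟪c, xstar⟫ → y = xstar)
    (x0 : EuclideanSpace ℝ (Fin n)) :
    ∃ θc : ℝ, 0 < θc ∧ ∀ θ : ℝ, θc ≤ θ →
      ∀ z ∈ X, dist (x0 - θ • c) xstar ≤ dist (x0 - θ • c) z :=
  projection_solves_lp_general m n A b X hX c xstar hopt huniq x0
end

section
/- Let A be an m×n real matrix and b ∈ ℝᵐ, and suppose X = {x ∈ ℝⁿ : A x ≤ b} is nonempty. Let Ā = [A | −b] be the m×(n+1) matrix obtained by appending the column −b to A, and let ē = (0,…,0,1) ∈ ℝⁿ⁺¹. Then min_{x ∈ X} ½(‖x‖² + 1) = sup_{u ∈ ℝᵐ, u ≥ 0, θ ∈ ℝ} { θ − ½ ‖Āᵀ u − θ ē‖² }, and the supremum is attained. -/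
/-!
Weak duality is the inequality `0 ≤ ‖(Āᵀu - θē) + x̄‖²` for `x̄ = (x, 1)`, because
`⟪Āᵀu - θē, x̄⟫ = u ⬝ (Ax - b) - θ ≤ -θ`. For equality, let `x` be the point of least norm of `X`.
It minimises `⟪x, ·⟫` over `X`, so Farkas' lemma for the cone spanned by the active rows of `A`
(closed by Carathéodory's theorem for cones) gives `u ≥ 0` with `Aᵀu = -x` and complementary
slackness. Then `b ⬝ u = -‖x‖²`, so for `θ = 1 + ‖x‖²` we get `Āᵀu - θē = -x̄`, and both sides
equal `½‖x̄‖²`.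
-/

open Set Filter Topology Matrix
open scoped RealInnerProductSpace

section Caratheodory

variable {𝕜 E ι : Type*} [Field 𝕜] [LinearOrder 𝕜] [IsStrictOrderedRing 𝕜]
  [AddCommGroup E] [Module 𝕜 E] {v : ι → E}

/-- The ratio test of the simplex method: move along the relation `g` until a coefficient of `u`
vanishes. -/
theorem exists_erase_nonneg_sum_smul_eq [DecidableEq ι] {s : Finset ι} {u g : ι → 𝕜}
    (hu : ∀ i ∈ s, 0 ≤ u i) (hg : ∑ i ∈ s, g i • v i = 0) (hpos : ∃ j ∈ s, 0 < g j) :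
    ∃ i ∈ s, ∃ w : ι → 𝕜, (∀ j ∈ s.erase i, 0 ≤ w j) ∧
      ∑ j ∈ s.erase i, w j • v j = ∑ j ∈ s, u j • v j := by
  obtain ⟨j, hjs, hj⟩ := hpos
  obtain ⟨i, hiP, hmin⟩ := (s.filter (0 < g ·)).exists_min_image (fun k => u k / g k)
    ⟨j, Finset.mem_filter.2 ⟨hjs, hj⟩⟩
  obtain ⟨his, hgi⟩ := Finset.mem_filter.1 hiP
  set r := u i / g i
  have hr : 0 ≤ r := div_nonneg (hu i his) hgi.le
  refine ⟨i, his, u - r • g, fun k hk => ?_, ?_⟩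
  · have hks := Finset.mem_of_mem_erase hk
    simp only [Pi.sub_apply, Pi.smul_apply, smul_eq_mul, sub_nonneg]
    rcases le_or_gt (g k) 0 with hgk | hgk
    · nlinarith [hu k hks]
    · exact (le_div_iff₀ hgk).1 (hmin k (Finset.mem_filter.2 ⟨hks, hgk⟩))
  · rw [Finset.sum_erase _ (by simp [r, div_mul_cancel₀ _ hgi.ne']), ← sub_eq_zero]
    simp only [Pi.sub_apply, Pi.smul_apply, smul_eq_mul, sub_smul, mul_smul,
      Finset.sum_sub_distrib, ← Finset.smul_sum, hg, smul_zero, sub_zero, sub_self]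

theorem exists_linearIndepOn_nonneg_sum_smul_eq (s : Finset ι) (u : ι → 𝕜)
    (hu : ∀ i ∈ s, 0 ≤ u i) :
    ∃ t ⊆ s, LinearIndepOn 𝕜 v (t : Set ι) ∧ ∃ w : ι → 𝕜, (∀ i ∈ t, 0 ≤ w i) ∧
      ∑ i ∈ t, w i • v i = ∑ i ∈ s, u i • v i := by
  classical
  induction s using Finset.strongInduction generalizing u with
  | H s ih =>
  by_cases hli : LinearIndepOn 𝕜 v (s : Set ι)
  · exact ⟨s, subset_rfl, hli, u, hu, rfl⟩
  obtain ⟨g, hg, j, hjs, hgj⟩ : ∃ g : ι → 𝕜, ∑ i ∈ s, g i • v i = 0 ∧ ∃ j ∈ s, 0 < g j := by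
    simp only [linearIndepOn_finset_iff, not_forall] at hli
    obtain ⟨g, hg, j, hjs, hgj⟩ := hli
    rcases lt_or_gt_of_ne hgj with hneg | hpos
    · exact ⟨-g, by simp [neg_smul, hg], j, hjs, by simpa using hneg⟩
    · exact ⟨g, hg, j, hjs, hpos⟩
  obtain ⟨i, his, w, hw, hsum⟩ := exists_erase_nonneg_sum_smul_eq hu hg ⟨j, hjs, hgj⟩
  obtain ⟨t, hts, htli, w', hw', hsum'⟩ := ih _ (Finset.erase_ssubset his) w hw
  exact ⟨t, hts.trans (Finset.erase_subset _ _), htli, w', hw', hsum'.trans hsum⟩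

end Caratheodory

namespace PointedCone

theorem mem_hull_range_iff {𝕜 E ι : Type*} [Semiring 𝕜] [PartialOrder 𝕜] [IsOrderedRing 𝕜]
    [AddCommMonoid E] [Module 𝕜 E] [Fintype ι] {v : ι → E} {x : E} :
    x ∈ hull 𝕜 (range v) ↔ ∃ u : ι → 𝕜, 0 ≤ u ∧ ∑ i, u i • v i = x := by
  rw [Submodule.mem_span_range_iff_exists_fun]
  constructor
  · rintro ⟨c, rfl⟩
    exact ⟨fun i => c i, fun i => (c i).2, rfl⟩
  · rintro ⟨u, hu, rfl⟩
    exact ⟨fun i => ⟨u i, hu i⟩, rfl⟩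

section Closed

variable {E ι : Type*} [AddCommGroup E] [Module ℝ E] [TopologicalSpace E]
  [IsTopologicalAddGroup E] [ContinuousSMul ℝ E] [T2Space E]

theorem isClosed_hull_range_of_linearIndependent [Fintype ι] {v : ι → E}
    (hv : LinearIndependent ℝ v) : IsClosed (hull ℝ (range v) : Set E) := by
  have hcone : (hull ℝ (range v) : Set E) = Fintype.linearCombination ℝ v '' Ici 0 := by
    ext x
    simp [mem_hull_range_iff, Fintype.linearCombination_apply]
  rw [hcone]
  refine (LinearMap.isClosedEmbedding_of_injective ?_).isClosedMap _ isClosed_Ici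
  rwa [LinearMap.ker_eq_bot, ← linearIndependent_iff_injective_fintypeLinearCombination]

theorem isClosed_hull_range [Finite ι] (v : ι → E) :
    IsClosed (hull ℝ (range v) : Set E) := by
  classical
  have := Fintype.ofFinite ι
  have hunion : (hull ℝ (range v) : Set E) =
      ⋃ t : {t : Finset ι // LinearIndepOn ℝ v (t : Set ι)},
        hull ℝ (range fun i : t.1 => v i) := by
    refine Subset.antisymm (fun x hx => ?_) (iUnion_subset fun t => ?_)
    · obtain ⟨u, hu, rfl⟩ := mem_hull_range_iff.1 hx
      obtain ⟨t, -, htli, w, hw, hsum⟩ :=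
        exists_linearIndepOn_nonneg_sum_smul_eq (v := v) Finset.univ u fun i _ => hu i
      refine mem_iUnion.2 ⟨⟨t, htli⟩, mem_hull_range_iff.2 ⟨fun i => w i, fun i => hw i i.2, ?_⟩⟩
      rw [Finset.sum_coe_sort t fun i => w i • v i, hsum]
    · exact Submodule.span_mono (range_comp_subset_range _ v)
  rw [hunion]
  exact isClosed_iUnion_of_finite fun t => isClosed_hull_range_of_linearIndependent t.2

end Closed

end PointedCone

theorem exists_inner_nonneg_of_notMem_hull_range {E ι : Type*} [NormedAddCommGroup E]
    [InnerProductSpace ℝ E] [CompleteSpace E] [Finite ι] {v : ι → E} {x : E}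
    (hx : x ∉ PointedCone.hull ℝ (range v)) : ∃ y, (∀ i, 0 ≤ ⟪v i, y⟫) ∧ ⟪x, y⟫ < 0 := by
  let C : ProperCone ℝ E := ⟨PointedCone.hull ℝ (range v), PointedCone.isClosed_hull_range v⟩
  obtain ⟨y, hy, hxy⟩ := C.hyperplane_separation' hx
  exact ⟨y, fun i => hy _ (PointedCone.subset_hull (mem_range_self i)), hxy⟩

theorem eventually_add_mul_le {a b c : ℝ} (hab : a ≤ b) (hc : a = b → c ≤ 0) :
    ∀ᶠ t in 𝓝[>] 0, a + t * c ≤ b := by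
  rcases hab.lt_or_eq with hlt | rfl
  · have hcont : Tendsto (fun t : ℝ => a + t * c) (𝓝 0) (𝓝 a) :=
      (continuous_const.add (continuous_id.mul continuous_const)).tendsto' 0 a (by simp)
    exact nhdsWithin_le_nhds ((hcont.eventually (gt_mem_nhds hlt)).mono fun _ => le_of_lt)
  · filter_upwards [self_mem_nhdsWithin] with t ht
    nlinarith [hc rfl, mem_Ioi.1 ht]

namespace Matrix

variable {ι κ : Type*} [Fintype κ] {A : Matrix ι κ ℝ} {b : ι → ℝ}

theorem exists_pos_mulVec_add_smul_le [Finite ι] {x d : κ → ℝ} (hx : A *ᵥ x ≤ b)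
    (hd : ∀ i, (A *ᵥ x) i = b i → (A *ᵥ d) i ≤ 0) : ∃ t : ℝ, 0 < t ∧ A *ᵥ (x + t • d) ≤ b := by
  have hev : ∀ᶠ t in 𝓝[>] (0 : ℝ), ∀ i, (A *ᵥ x) i + t * (A *ᵥ d) i ≤ b i :=
    eventually_all.2 fun i => eventually_add_mul_le (hx i) (hd i)
  obtain ⟨t, ht, hpos⟩ := (hev.and self_mem_nhdsWithin).exists
  exact ⟨t, hpos, fun i => by simpa [mulVec_add, mulVec_smul] using ht i⟩

theorem inner_toLp_transpose_mulVec [Fintype ι] (u : ι → ℝ) (x : EuclideanSpace ℝ κ) :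
    ⟪WithLp.toLp 2 (Aᵀ *ᵥ u), x⟫ = u ⬝ᵥ (A *ᵥ x) := by
  rw [EuclideanSpace.inner_eq_star_dotProduct, dotProduct_mulVec, mulVec_transpose]
  simp [dotProduct_comm]

theorem isClosed_setOf_mulVec_le (A : Matrix ι κ ℝ) (b : ι → ℝ) :
    IsClosed {x : EuclideanSpace ℝ κ | A *ᵥ x ≤ b} :=
  isClosed_le (Continuous.matrix_mulVec continuous_const (PiLp.continuous_ofLp 2 _))
    continuous_const

theorem convex_setOf_mulVec_le (A : Matrix ι κ ℝ) (b : ι → ℝ) :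
    Convex ℝ {x : EuclideanSpace ℝ κ | A *ᵥ x ≤ b} :=
  (convex_Iic b).linear_preimage ((mulVecLin A).comp (WithLp.linearEquiv 2 ℝ (κ → ℝ)).toLinearMap)

theorem exists_nonneg_toLp_transpose_mulVec_eq_of_isMinOn [Fintype ι] {x c : EuclideanSpace ℝ κ}
    (hx : A *ᵥ x ≤ b) (hmin : IsMinOn (fun w => ⟪c, w⟫) {w : EuclideanSpace ℝ κ | A *ᵥ w ≤ b} x) :
    ∃ u : ι → ℝ, 0 ≤ u ∧ WithLp.toLp 2 (Aᵀ *ᵥ u) = -c ∧ u ⬝ᵥ (b - A *ᵥ x) = 0 := by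
  classical
  let active (i : ι) : Prop := (A *ᵥ x) i = b i
  let v (i : ι) : EuclideanSpace ℝ κ := if active i then WithLp.toLp 2 (A i) else 0
  have hinner (i : ι) (y : EuclideanSpace ℝ κ) : ⟪WithLp.toLp 2 (A i), y⟫ = (A *ᵥ y) i := by
    simp [EuclideanSpace.inner_eq_star_dotProduct, mulVec, dotProduct_comm]
  have hcone : -c ∈ PointedCone.hull ℝ (range v) := by
    by_contra hnot
    obtain ⟨y, hy, hcy⟩ := exists_inner_nonneg_of_notMem_hull_range hnot
    obtain ⟨t, ht, hfeas⟩ := exists_pos_mulVec_add_smul_le (d := (-y).ofLp) hx fun i hi => by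
      simpa [v, active, hi, hinner, mulVec_neg] using hy i
    have hle : ⟪c, x⟫ ≤ ⟪c, x + t • -y⟫ := hmin hfeas
    simp only [inner_add_right, inner_smul_right, inner_neg_right, inner_neg_left] at hle hcy
    nlinarith
  obtain ⟨u, hu, hsum⟩ := PointedCone.mem_hull_range_iff.1 hcone
  refine ⟨fun i => if active i then u i else 0, fun i => ?_, ?_, ?_⟩
  · dsimp only
    split_ifs
    exacts [hu i, le_rfl]
  · rw [mulVec_transpose, vecMul_eq_sum, WithLp.toLp_sum, ← hsum]
    refine Finset.sum_congr rfl fun i _ => ?_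
    by_cases hi : active i <;> simp [v, hi]
  · refine Finset.sum_eq_zero fun i _ => ?_
    by_cases hi : active i
    · simp [show b i - (A *ᵥ x) i = 0 from sub_eq_zero.2 hi.symm]
    · simp [hi]

end Matrix

/-- `x` is the point of least norm of `K`. -/
theorem exists_mem_isMinOn_inner_self {F : Type*} [NormedAddCommGroup F] [InnerProductSpace ℝ F]
    {K : Set F} (hne : K.Nonempty) (hc : IsComplete K) (hK : Convex ℝ K) :
    ∃ x ∈ K, IsMinOn (fun w => ⟪x, w⟫) K x := by
  obtain ⟨x, hxK, hx⟩ := exists_norm_eq_iInf_of_complete_convex hne hc hK 0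
  refine ⟨x, hxK, fun w hw => ?_⟩
  have := (norm_eq_iInf_iff_real_inner_le_zero hK hxK).1 hx w hw
  simp only [zero_sub, inner_neg_left, inner_sub_right] at this
  show ⟪x, x⟫ ≤ ⟪x, w⟫
  linarith

theorem sub_half_norm_sq_le_of_inner_le_neg {F : Type*} [NormedAddCommGroup F]
    [InnerProductSpace ℝ F] {W z : F} {θ : ℝ} (h : ⟪W, z⟫ ≤ -θ) :
    θ - 1 / 2 * ‖W‖ ^ 2 ≤ 1 / 2 * ‖z‖ ^ 2 := by
  nlinarith [norm_add_sq_real W z, sq_nonneg ‖W + z‖]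

namespace EuclideanSpace

variable {n : ℕ}

def snoc (x : EuclideanSpace ℝ (Fin n)) (t : ℝ) : EuclideanSpace ℝ (Fin (n + 1)) :=
  WithLp.toLp 2 (Fin.snoc x.ofLp t)

theorem inner_snoc_snoc (x y : EuclideanSpace ℝ (Fin n)) (s t : ℝ) :
    ⟪snoc x s, snoc y t⟫ = ⟪x, y⟫ + s * t := by
  simp [snoc, PiLp.inner_apply, Fin.sum_univ_castSucc, mul_comm]

theorem norm_snoc_sq (x : EuclideanSpace ℝ (Fin n)) (t : ℝ) :
    ‖snoc x t‖ ^ 2 = ‖x‖ ^ 2 + t ^ 2 := by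
  rw [← real_inner_self_eq_norm_sq, inner_snoc_snoc, real_inner_self_eq_norm_sq]
  ring

theorem toLp_transpose_mulVec_sub_smul_single {ι : Type*} [Fintype ι]
    (A : Matrix ι (Fin n) ℝ) (b u : ι → ℝ) (θ : ℝ) :
    WithLp.toLp 2 ((Matrix.of fun i => Fin.snoc (A i) (-(b i)))ᵀ *ᵥ u) -
        θ • EuclideanSpace.single (Fin.last n) 1 =
      snoc (WithLp.toLp 2 (Aᵀ *ᵥ u)) (-(b ⬝ᵥ u) - θ) := by
  ext j
  induction j using Fin.lastCases with
  | last => simp [snoc, Matrix.mulVec, dotProduct]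
  | cast j => simp [snoc, Matrix.mulVec, dotProduct, (Fin.castSucc_lt_last j).ne]

end EuclideanSpace

open EuclideanSpace

section Duality

variable {ι : Type*} [Fintype ι] {n : ℕ} {A : Matrix ι (Fin n) ℝ} {b : ι → ℝ}

variable (A b) in
/-- `θ - ½‖Āᵀu - θē‖²` for `Ā = [A | -b]`, see `toLp_transpose_mulVec_sub_smul_single`. -/
noncomputable def dualObjective (u : ι → ℝ) (θ : ℝ) : ℝ :=
  θ - 1 / 2 * ‖snoc (WithLp.toLp 2 (Aᵀ *ᵥ u)) (-(b ⬝ᵥ u) - θ)‖ ^ 2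

theorem dualObjective_le {x : EuclideanSpace ℝ (Fin n)} (hx : A *ᵥ x ≤ b) {u : ι → ℝ}
    (hu : 0 ≤ u) (θ : ℝ) : dualObjective A b u θ ≤ 1 / 2 * (‖x‖ ^ 2 + 1) := by
  have hslack : 0 ≤ u ⬝ᵥ (b - A *ᵥ x) := dotProduct_nonneg_of_nonneg hu (sub_nonneg.2 hx)
  have hinner : ⟪snoc (WithLp.toLp 2 (Aᵀ *ᵥ u)) (-(b ⬝ᵥ u) - θ), snoc x 1⟫ ≤ -θ := by
    rw [inner_snoc_snoc, inner_toLp_transpose_mulVec, dotProduct_comm b u]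
    rw [dotProduct_sub] at hslack
    linarith
  have := sub_half_norm_sq_le_of_inner_le_neg hinner
  rwa [norm_snoc_sq x, one_pow] at this

theorem dualObjective_eq {x : EuclideanSpace ℝ (Fin n)} {u : ι → ℝ}
    (hAu : WithLp.toLp 2 (Aᵀ *ᵥ u) = -x) (hslack : u ⬝ᵥ (b - A *ᵥ x) = 0) :
    dualObjective A b u (1 + ‖x‖ ^ 2) = 1 / 2 * (‖x‖ ^ 2 + 1) := by
  have hbu : b ⬝ᵥ u = -‖x‖ ^ 2 := by
    rw [dotProduct_sub, sub_eq_zero, dotProduct_comm] at hslack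
    rw [hslack, ← inner_toLp_transpose_mulVec, hAu, inner_neg_left,
      real_inner_self_eq_norm_sq]
  rw [dualObjective, hAu, hbu, norm_snoc_sq, norm_neg]
  ring

end Duality

/-- With `X = {x : A x ≤ b}` nonempty, `Ā = [A | −b]` and `ē = (0,…,0,1)`,
`min_{x ∈ X} ½(‖x‖² + 1) = sup_{u ≥ 0, θ} { θ − ½‖Āᵀu − θē‖² }` and the supremum is
attained (stated: some value `v` is simultaneously the least value of the left-hand side
set and the greatest value of the right-hand side set). -/
theorem least_norm_dual_sup
    (m n : ℕ) (A : Matrix (Fin m) (Fin n) ℝ) (b : Fin m → ℝ)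
    (hne : {x : EuclideanSpace ℝ (Fin n) | A.mulVec x ≤ b}.Nonempty)
    (Abar : Matrix (Fin m) (Fin (n + 1)) ℝ)
    (hAbar : Abar = Matrix.of fun i => Fin.snoc (A i) (-(b i)))
    (ebar : EuclideanSpace ℝ (Fin (n + 1)))
    (hebar : ebar = EuclideanSpace.single (Fin.last n) 1) :
    ∃ v : ℝ,
      IsLeast {w : ℝ | ∃ x : EuclideanSpace ℝ (Fin n),
          A.mulVec x ≤ b ∧ w = (1 / 2) * (‖x‖ ^ 2 + 1)} v ∧
      IsGreatest {w : ℝ | ∃ (u : Fin m → ℝ) (θ : ℝ), 0 ≤ u ∧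
          w = θ - (1 / 2) * ‖(WithLp.equiv 2 (Fin (n + 1) → ℝ)).symm (Abar.transpose.mulVec u) - θ • ebar‖ ^ 2} v := by
  have hdual (u : Fin m → ℝ) (θ : ℝ) : θ - 1 / 2 *
      ‖(WithLp.equiv 2 (Fin (n + 1) → ℝ)).symm (Abarᵀ *ᵥ u) - θ • ebar‖ ^ 2 =
      dualObjective A b u θ := by
    rw [hAbar, hebar, WithLp.equiv_symm_apply, toLp_transpose_mulVec_sub_smul_single]
    rfl
  obtain ⟨xs, hxs, hmin⟩ := exists_mem_isMinOn_inner_self hne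
    (isClosed_setOf_mulVec_le A b).isComplete (convex_setOf_mulVec_le A b)
  obtain ⟨us, hus, hAus, hslack⟩ := exists_nonneg_toLp_transpose_mulVec_eq_of_isMinOn hxs hmin
  have hopt := dualObjective_eq hAus hslack
  refine ⟨1 / 2 * (‖xs‖ ^ 2 + 1), ⟨⟨xs, hxs, rfl⟩, ?_⟩,
    ⟨us, 1 + ‖xs‖ ^ 2, hus, by rw [hdual, hopt]⟩, ?_⟩
  · rintro _ ⟨x, hx, rfl⟩
    exact hopt ▸ dualObjective_le hx hus _
  · rintro _ ⟨u, θ, hu, rfl⟩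
    exact (hdual u θ).symm ▸ dualObjective_le hxs hu θ
end

section
/- Let A be an m×n real matrix and b ∈ ℝᵐ, and suppose X = {x ∈ ℝⁿ : A x ≤ b} is nonempty. Let Ā = [A | −b], let K = { Āᵀ u : u ∈ ℝᵐ, u ≥ 0 } ⊆ ℝⁿ⁺¹ be the convex cone generated by the rows of Ā, and let ē = (0,…,0,1) ∈ ℝⁿ⁺¹. Then γ := dist(ē, K) > 0 and min_{x ∈ X} ½(‖x‖² + 1) = 1/(2γ²). -/
/-!
The polar cone of `K` is `{(x, t) : A x ≤ t b}`, so each `x ∈ X` gives the polar vector `(x, 1)`,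
and weak duality `⟪ē, w⟫ ≤ dist(ē, K) ‖w‖` for polar `w` yields `γ² (‖x‖² + 1) ≥ 1`. Conversely
the residual `q = ē - p` of the projection `p` of `ē` onto `K` is polar with `‖q‖ = γ` and
`⟪ē, q⟫ = ‖q‖²`, so its last coordinate is `γ² > 0`, and dehomogenizing `q` gives a point of `X`
where equality holds.
-/

open Metric Matrix
open scoped RealInnerProductSpace

section Duality

variable {E : Type*} [NormedAddCommGroup E] [InnerProductSpace ℝ E]

theorem inner_le_infDist_mul_norm {K : Set E} (hK : K.Nonempty) {w : E}
    (hw : ∀ z ∈ K, ⟪z, w⟫ ≤ 0) (e : E) : ⟪e, w⟫ ≤ infDist e K * ‖w‖ := by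
  rcases eq_or_ne w 0 with rfl | hw0
  · simp
  rw [← div_le_iff₀ (norm_pos_iff.2 hw0), le_infDist hK]
  intro z hz
  rw [div_le_iff₀ (norm_pos_iff.2 hw0), dist_eq_norm]
  calc ⟪e, w⟫ ≤ ⟪e - z, w⟫ := by rw [inner_sub_left]; linarith [hw z hz]
    _ ≤ ‖e - z‖ * ‖w‖ := real_inner_le_norm _ _

theorem PointedCone.exists_inner_nonpos_norm_eq_infDist [CompleteSpace E] (K : PointedCone ℝ E)
    (e : E) : ∃ q : E, (∀ z ∈ K, ⟪z, q⟫ ≤ 0) ∧ ‖q‖ = infDist e K ∧ ⟪e, q⟫ = ‖q‖ ^ 2 := by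
  obtain ⟨p, hp, hpmin⟩ := exists_norm_eq_iInf_of_complete_convex ⟨0, K.closure.zero_mem⟩
    isClosed_closure.isComplete K.closure.convex e
  have hvar := (norm_eq_iInf_iff_real_inner_le_zero K.closure.convex hp).1 hpmin
  have hp_orth : ⟪e - p, p⟫ = 0 := by
    have h0 := hvar 0 K.closure.zero_mem
    have h2 := hvar (p + p) (K.closure.add_mem hp hp)
    rw [zero_sub, inner_neg_right] at h0
    rw [add_sub_cancel_right] at h2
    linarith
  refine ⟨e - p, fun z hz => ?_, ?_, ?_⟩
  · have := hvar (p + z) (K.closure.add_mem hp (subset_closure hz))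
    rwa [add_sub_cancel_left, real_inner_comm] at this
  · rw [← infDist_closure, infDist_eq_iInf, hpmin]
    simp only [dist_eq_norm]
    rfl
  · calc ⟪e, e - p⟫ = ⟪e - p, e - p⟫ + ⟪e - p, p⟫ := by
          rw [← inner_add_right, sub_add_cancel, real_inner_comm]
      _ = ‖e - p‖ ^ 2 := by rw [hp_orth, add_zero, real_inner_self_eq_norm_sq]

end Duality

section RowCone

variable {κ ι : Type*} [Fintype κ]

noncomputable def Matrix.rowCone (M : Matrix κ ι ℝ) : PointedCone ℝ (EuclideanSpace ℝ ι) :=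
  (PointedCone.positive ℝ (κ → ℝ)).map
    ((WithLp.linearEquiv 2 ℝ (ι → ℝ)).symm.toLinearMap ∘ₗ Mᵀ.mulVecLin)

theorem Matrix.mem_rowCone {M : Matrix κ ι ℝ} {z : EuclideanSpace ℝ ι} :
    z ∈ M.rowCone ↔ ∃ u, 0 ≤ u ∧ WithLp.toLp 2 (Mᵀ *ᵥ u) = z := by
  simp [rowCone, mulVec_transpose]

theorem Matrix.inner_toLp_transpose_mulVec_s4 [Fintype ι] (M : Matrix κ ι ℝ) (u : κ → ℝ)
    (y : EuclideanSpace ℝ ι) : ⟪WithLp.toLp 2 (Mᵀ *ᵥ u), y⟫ = u ⬝ᵥ (M *ᵥ y.ofLp) := by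
  simp [EuclideanSpace.inner_eq_star_dotProduct, dotProduct_mulVec, vecMul_transpose,
    dotProduct_comm]

theorem Matrix.forall_mem_rowCone_inner_nonpos_iff [Fintype ι] {M : Matrix κ ι ℝ}
    {y : EuclideanSpace ℝ ι} :
    (∀ z ∈ M.rowCone, ⟪z, y⟫ ≤ 0) ↔ M *ᵥ y.ofLp ≤ 0 := by
  classical
  simp only [mem_rowCone, forall_exists_index, and_imp]
  constructor
  · intro h i
    have := h _ (Pi.single i 1) (Pi.single_nonneg.2 zero_le_one) rfl
    rwa [inner_toLp_transpose_mulVec_s4, single_one_dotProduct] at this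
  · rintro h _ u hu rfl
    rw [inner_toLp_transpose_mulVec_s4]
    exact Finset.sum_nonpos fun i _ => mul_nonpos_of_nonneg_of_nonpos (hu i) (h i)

end RowCone

section Snoc

variable {n : ℕ}

theorem Matrix.mulVec_of_snoc {κ : Type*} (A : Matrix κ (Fin n) ℝ) (c : κ → ℝ)
    (v : Fin (n + 1) → ℝ) :
    (Matrix.of fun i => Fin.snoc (A i) (c i)) *ᵥ v = A *ᵥ Fin.init v + v (Fin.last n) • c := by
  ext i
  simp [mulVec, dotProduct, Fin.sum_univ_castSucc, Fin.init, mul_comm]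

theorem EuclideanSpace.norm_toLp_snoc_sq (x : Fin n → ℝ) (t : ℝ) :
    ‖WithLp.toLp 2 (Fin.snoc x t : Fin (n + 1) → ℝ)‖ ^ 2 = ‖WithLp.toLp 2 x‖ ^ 2 + t ^ 2 := by
  simp [EuclideanSpace.norm_sq_eq, Fin.sum_univ_castSucc]

theorem EuclideanSpace.norm_toLp_smul_init_sq_add_one (y : EuclideanSpace ℝ (Fin (n + 1)))
    (hy : y (Fin.last n) ≠ 0) :
    ‖WithLp.toLp 2 ((y (Fin.last n))⁻¹ • Fin.init y.ofLp)‖ ^ 2 + 1 =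
      ‖y‖ ^ 2 / y (Fin.last n) ^ 2 := by
  have hy_split := norm_toLp_snoc_sq (Fin.init y.ofLp) (y (Fin.last n))
  rw [Fin.snoc_init_self, WithLp.toLp_ofLp] at hy_split
  rw [WithLp.toLp_smul, norm_smul, mul_pow, hy_split, norm_inv, Real.norm_eq_abs, inv_pow, sq_abs]
  field_simp

end Snoc

section Homogenization

variable {κ : Type*} [Fintype κ] {n : ℕ} (A : Matrix κ (Fin n) ℝ) (b : κ → ℝ)

def Matrix.homogenize : Matrix κ (Fin (n + 1)) ℝ :=
  of fun i => Fin.snoc (A i) (-b i)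

theorem Matrix.forall_mem_rowCone_homogenize_inner_nonpos_iff {y : EuclideanSpace ℝ (Fin (n + 1))} :
    (∀ z ∈ (A.homogenize b).rowCone, ⟪z, y⟫ ≤ 0) ↔ A *ᵥ Fin.init y.ofLp ≤ y (Fin.last n) • b := by
  rw [forall_mem_rowCone_inner_nonpos_iff, homogenize, mulVec_of_snoc, ← Pi.neg_def, smul_neg,
    ← sub_eq_add_neg, sub_nonpos]

theorem Matrix.one_le_infDist_sq_mul_norm_sq_add_one {x : EuclideanSpace ℝ (Fin n)}
    (hx : A *ᵥ x.ofLp ≤ b) :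
    1 ≤ infDist (EuclideanSpace.single (Fin.last n) (1 : ℝ)) (A.homogenize b).rowCone ^ 2 *
      (‖x‖ ^ 2 + 1) := by
  set γ := infDist (EuclideanSpace.single (Fin.last n) (1 : ℝ))
    ((A.homogenize b).rowCone : Set (EuclideanSpace ℝ (Fin (n + 1))))
  set w : EuclideanSpace ℝ (Fin (n + 1)) := WithLp.toLp 2 (Fin.snoc x.ofLp 1)
  have hw_polar : ∀ z ∈ (A.homogenize b).rowCone, ⟪z, w⟫ ≤ 0 :=
    (A.forall_mem_rowCone_homogenize_inner_nonpos_iff b).2 (by simpa [w] using hx)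
  have hw : 1 ≤ γ * ‖w‖ := by
    simpa [w, EuclideanSpace.inner_single_left] using
      inner_le_infDist_mul_norm ⟨0, (A.homogenize b).rowCone.zero_mem⟩ hw_polar
        (EuclideanSpace.single (Fin.last n) (1 : ℝ))
  have hw_norm : ‖w‖ ^ 2 = ‖x‖ ^ 2 + 1 := by simp [w, EuclideanSpace.norm_toLp_snoc_sq]
  calc (1 : ℝ) ≤ (γ * ‖w‖) ^ 2 := one_le_pow₀ hw
    _ = γ ^ 2 * (‖x‖ ^ 2 + 1) := by rw [mul_pow, hw_norm]

theorem Matrix.exists_norm_sq_add_one_eq_inv_infDist_sq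
    (hγ : 0 < infDist (EuclideanSpace.single (Fin.last n) (1 : ℝ)) (A.homogenize b).rowCone) :
    ∃ x : EuclideanSpace ℝ (Fin n), A *ᵥ x.ofLp ≤ b ∧ ‖x‖ ^ 2 + 1 =
      (infDist (EuclideanSpace.single (Fin.last n) (1 : ℝ)) (A.homogenize b).rowCone ^ 2)⁻¹ := by
  obtain ⟨q, hq_polar, hq_norm, hq_inner⟩ :=
    PointedCone.exists_inner_nonpos_norm_eq_infDist (A.homogenize b).rowCone
      (EuclideanSpace.single (Fin.last n) (1 : ℝ))
  rw [EuclideanSpace.inner_single_left, map_one, one_mul, hq_norm] at hq_inner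
  have hq_last : 0 < q (Fin.last n) := by rw [hq_inner]; positivity
  have hq_feasible := (A.forall_mem_rowCone_homogenize_inner_nonpos_iff b).1 hq_polar
  refine ⟨WithLp.toLp 2 ((q (Fin.last n))⁻¹ • Fin.init q.ofLp), ?_, ?_⟩
  · calc A *ᵥ ((q (Fin.last n))⁻¹ • Fin.init q.ofLp)
          = (q (Fin.last n))⁻¹ • A *ᵥ Fin.init q.ofLp := mulVec_smul _ _ _
      _ ≤ (q (Fin.last n))⁻¹ • q (Fin.last n) • b :=
          smul_le_smul_of_nonneg_left hq_feasible (inv_nonneg.2 hq_last.le)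
      _ = b := inv_smul_smul₀ hq_last.ne' b
  · rw [EuclideanSpace.norm_toLp_smul_init_sq_add_one q hq_last.ne', hq_norm, hq_inner]
    field_simp

end Homogenization

/-- With `X = {x : A x ≤ b}` nonempty, `Ā = [A | −b]`,
`K = {Āᵀu : u ≥ 0} ⊆ ℝⁿ⁺¹` and `ē = (0,…,0,1)`, one has `γ := dist(ē, K) > 0` and
`min_{x ∈ X} ½(‖x‖² + 1) = 1/(2γ²)` (the minimum being attained: `IsLeast`). -/
theorem least_norm_eq_inv_cone_dist
    (m n : ℕ) (A : Matrix (Fin m) (Fin n) ℝ) (b : Fin m → ℝ)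
    (hne : {x : EuclideanSpace ℝ (Fin n) | A.mulVec x ≤ b}.Nonempty)
    (Abar : Matrix (Fin m) (Fin (n + 1)) ℝ)
    (hAbar : Abar = Matrix.of fun i => Fin.snoc (A i) (-(b i)))
    (K : Set (EuclideanSpace ℝ (Fin (n + 1))))
    (hK : K = {z : EuclideanSpace ℝ (Fin (n + 1)) | ∃ u : Fin m → ℝ, 0 ≤ u ∧
        z = (WithLp.equiv 2 (Fin (n + 1) → ℝ)).symm (Abar.transpose.mulVec u)})
    (ebar : EuclideanSpace ℝ (Fin (n + 1)))
    (hebar : ebar = EuclideanSpace.single (Fin.last n) 1) :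
    0 < Metric.infDist ebar K ∧
      IsLeast {w : ℝ | ∃ x : EuclideanSpace ℝ (Fin n),
          A.mulVec x ≤ b ∧ w = (1 / 2) * (‖x‖ ^ 2 + 1)}
        (1 / (2 * (Metric.infDist ebar K) ^ 2)) := by
  subst hAbar hebar
  obtain rfl : K = (A.homogenize b).rowCone := by
    ext z
    rw [hK, SetLike.mem_coe, mem_rowCone]
    simp [eq_comm, homogenize]
  set γ := infDist (EuclideanSpace.single (Fin.last n) (1 : ℝ))
    ((A.homogenize b).rowCone : Set (EuclideanSpace ℝ (Fin (n + 1))))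
  have hlower (x : EuclideanSpace ℝ (Fin n)) (hx : A *ᵥ x.ofLp ≤ b) : 1 ≤ γ ^ 2 * (‖x‖ ^ 2 + 1) :=
    A.one_le_infDist_sq_mul_norm_sq_add_one b hx
  obtain ⟨x₀, hx₀⟩ := hne
  have hγ : 0 < γ := by
    have h := hlower x₀ hx₀
    have hγ0 : γ ≠ 0 := by rintro hγ0; norm_num [hγ0] at h
    exact infDist_nonneg.lt_of_ne' hγ0
  obtain ⟨xs, hxs, hxs_norm⟩ : ∃ x : EuclideanSpace ℝ (Fin n), A *ᵥ x.ofLp ≤ b ∧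
      ‖x‖ ^ 2 + 1 = (γ ^ 2)⁻¹ := A.exists_norm_sq_add_one_eq_inv_infDist_sq b hγ
  refine ⟨hγ, ⟨xs, hxs, by rw [hxs_norm]; field_simp⟩, ?_⟩
  rintro _ ⟨x, hx, rfl⟩
  rw [div_le_iff₀ (by positivity)]
  linarith [hlower x hx]
end

section
/- Let X ⊆ ℝⁿ be a nonempty compact convex set, let f : ℝⁿ → ℝ be convex and continuous, pick x⁰ ∈ X and set f̄ = f(x⁰). Define the truncated epigraph set X̄ = { (x, ξ) ∈ ℝⁿ × ℝ : x ∈ X, f(x) ≤ ξ ≤ f̄ } and c̄ = (0,…,0,1) ∈ ℝⁿ⁺¹. Then X̄ is nonempty, compact and convex, min_{x̄ ∈ X̄} c̄·x̄ = min_{x ∈ X} f(x), and for every starting point p⁰ ∈ ℝⁿ⁺¹, min_{x ∈ X} f(x) = lim_{τ → ∞} c̄ · P_{X̄}(p⁰ − τ c̄), where P_{X̄} is the metric projection onto X̄. -/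
open scoped RealInnerProductSpace
open Filter Set

/-!
The last coordinate `ξ` of a point of `X̄` is `⟪c̄, ·⟫`, and its minimum over `X̄` is `min_X f`,
attained at `z = (x*, f x*)`. If `P` is the point of `X̄` nearest to `p − τ c̄`, comparing
`‖p − τ c̄ − P‖² ≤ ‖p − τ c̄ − z‖²` (the `τ² ‖c̄‖²` terms cancel) gives
`2 τ ⟪c̄, P − z⟫ ≤ ‖p − z‖²`, so `⟪c̄, P⟫` is squeezed onto the minimum at rate `O(1/τ)`.
-/

def truncatedEpigraph {E : Type*} (s : Set E) (f : E → ℝ) (b : ℝ) : Set (E × ℝ) :=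
  {p | p.1 ∈ s ∧ f p.1 ≤ p.2} ∩ {p | p.2 ≤ b}

section truncatedEpigraph

variable {E : Type*} {s : Set E} {f : E → ℝ} {b : ℝ}

theorem isCompact_truncatedEpigraph [TopologicalSpace E] [T2Space E] (hs : IsCompact s)
    (hf : ContinuousOn f s) : IsCompact (truncatedEpigraph s f b) := by
  obtain ⟨m, hm⟩ := hs.bddBelow_image hf
  refine (hs.prod (isCompact_Icc (a := m) (b := b))).of_isClosed_subset
    ((hs.isClosed.epigraph hf).inter (isClosed_le continuous_snd continuous_const)) ?_
  rintro ⟨x, r⟩ ⟨⟨hx, hfx⟩, hr⟩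
  exact ⟨hx, (hm (mem_image_of_mem f hx)).trans hfx, hr⟩

theorem ConvexOn.convex_truncatedEpigraph [AddCommGroup E] [Module ℝ E] (hf : ConvexOn ℝ s f) :
    Convex ℝ (truncatedEpigraph s f b) :=
  hf.convex_epigraph.inter (convex_halfSpace_le (LinearMap.snd ℝ E ℝ).isLinear b)

theorem isLeast_image_snd_truncatedEpigraph {v : ℝ} (hv : IsLeast (f '' s) v) (hb : v ≤ b) :
    IsLeast (Prod.snd '' truncatedEpigraph s f b) v := by
  obtain ⟨⟨x, hx, rfl⟩, hmin⟩ := hv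
  refine ⟨⟨(x, f x), ⟨⟨hx, le_rfl⟩, hb⟩, rfl⟩, ?_⟩
  rintro _ ⟨p, ⟨⟨hp, hfp⟩, -⟩, rfl⟩
  exact (hmin (mem_image_of_mem f hp)).trans hfp

end truncatedEpigraph

section NearestPointAlongDirection

variable {E : Type*} [NormedAddCommGroup E] [InnerProductSpace ℝ E]

theorem two_mul_inner_sub_le_of_dist_sub_smul_le {p c y z : E} {τ : ℝ}
    (h : dist (p - τ • c) y ≤ dist (p - τ • c) z) : 2 * τ * ⟪c, y - z⟫ ≤ ‖p - z‖ ^ 2 := by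
  have hsq : ‖p - y - τ • c‖ ^ 2 ≤ ‖p - z - τ • c‖ ^ 2 := by
    rw [dist_eq_norm, dist_eq_norm, sub_right_comm p _ y, sub_right_comm p _ z] at h
    gcongr
  have hinner : ⟪c, y - z⟫ = ⟪p - z, c⟫ - ⟪p - y, c⟫ := by
    rw [← inner_sub_left, sub_sub_sub_cancel_left, real_inner_comm]
  rw [norm_sub_sq_real (p - y), norm_sub_sq_real (p - z), real_inner_smul_right,
    real_inner_smul_right] at hsq
  rw [hinner]
  nlinarith [sq_nonneg ‖p - y‖]

theorem tendsto_inner_nearest_sub_smul_atTop {C : Set E} {p c : E} {v : ℝ}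
    (hv : IsLeast ((fun y => ⟪c, y⟫) '' C) v) {P : ℝ → E}
    (hP : ∀ τ : ℝ, P τ ∈ C ∧ ∀ z ∈ C, dist (p - τ • c) (P τ) ≤ dist (p - τ • c) z) :
    Tendsto (fun τ => ⟪c, P τ⟫) atTop (nhds v) := by
  obtain ⟨⟨z, hz, rfl⟩, hmin⟩ := hv
  have hupper : ∀ τ > 0, ⟪c, P τ⟫ ≤ ⟪c, z⟫ + ‖p - z‖ ^ 2 / 2 * τ⁻¹ := by
    intro τ hτ
    have h := two_mul_inner_sub_le_of_dist_sub_smul_le ((hP τ).2 z hz)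
    rw [inner_sub_right] at h
    field_simp
    nlinarith
  have hlim : Tendsto (fun τ : ℝ => ⟪c, z⟫ + ‖p - z‖ ^ 2 / 2 * τ⁻¹) atTop (nhds ⟪c, z⟫) := by
    simpa using tendsto_inv_atTop_zero.const_mul (‖p - z‖ ^ 2 / 2) |>.const_add ⟪c, z⟫
  refine tendsto_of_tendsto_of_tendsto_of_le_of_le' tendsto_const_nhds hlim
    (Eventually.of_forall fun τ => hmin ⟨P τ, (hP τ).1, rfl⟩) ?_
  filter_upwards [eventually_gt_atTop 0] with τ hτ using hupper τ hτ

end NearestPointAlongDirection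

/-- Let `X ⊆ ℝⁿ` be nonempty compact convex, `f` convex continuous,
`x⁰ ∈ X`, `f̄ = f x⁰`, `X̄ = {(x, ξ) : x ∈ X, f x ≤ ξ ≤ f̄}` and `c̄ = (0,…,0,1)`.
Then `X̄` is nonempty, compact and convex, `min_{x̄∈X̄} c̄·x̄ = min_{x∈X} f x` (both minima
attained, with common value `v`) and for every `p⁰`,
`min_{x∈X} f x = lim_{τ→∞} c̄ · P_{X̄}(p⁰ − τ c̄)` (the projection `P_{X̄}(p⁰ − τ c̄)`
being given as a function `P` of `τ` characterized as the distance minimizer).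
The product `ℝⁿ × ℝ ≃ ℝⁿ⁺¹` carries the Euclidean (`ℓ²`) inner product via `WithLp 2`. -/
theorem truncated_epigraph_projection_limit
    (n : ℕ) (X : Set (EuclideanSpace ℝ (Fin n)))
    (hXne : X.Nonempty) (hXcomp : IsCompact X) (hXconv : Convex ℝ X)
    (f : EuclideanSpace ℝ (Fin n) → ℝ)
    (hfconv : ConvexOn ℝ Set.univ f) (hfcont : Continuous f)
    (x0 : EuclideanSpace ℝ (Fin n)) (hx0 : x0 ∈ X)
    (fbar : ℝ) (hfbar : fbar = f x0)
    (Xbar : Set (WithLp 2 (EuclideanSpace ℝ (Fin n) × ℝ)))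
    (hXbar : Xbar = {p : WithLp 2 (EuclideanSpace ℝ (Fin n) × ℝ) |
        (WithLp.equiv 2 (EuclideanSpace ℝ (Fin n) × ℝ) p).1 ∈ X ∧
        f (WithLp.equiv 2 (EuclideanSpace ℝ (Fin n) × ℝ) p).1 ≤
          (WithLp.equiv 2 (EuclideanSpace ℝ (Fin n) × ℝ) p).2 ∧
        (WithLp.equiv 2 (EuclideanSpace ℝ (Fin n) × ℝ) p).2 ≤ fbar})
    (cbar : WithLp 2 (EuclideanSpace ℝ (Fin n) × ℝ))
    (hcbar : cbar = (WithLp.equiv 2 (EuclideanSpace ℝ (Fin n) × ℝ)).symm (0, 1)) :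
    Xbar.Nonempty ∧ IsCompact Xbar ∧ Convex ℝ Xbar ∧
      ∃ v : ℝ, IsLeast (f '' X) v ∧ IsLeast ((fun p => ⟪cbar, p⟫) '' Xbar) v ∧
        ∀ (p0 : WithLp 2 (EuclideanSpace ℝ (Fin n) × ℝ))
          (P : ℝ → WithLp 2 (EuclideanSpace ℝ (Fin n) × ℝ)),
          (∀ τ : ℝ, P τ ∈ Xbar ∧
            ∀ z ∈ Xbar, dist (p0 - τ • cbar) (P τ) ≤ dist (p0 - τ • cbar) z) →
          Tendsto (fun τ : ℝ => ⟪cbar, P τ⟫) atTop (nhds v) := by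
  set e := WithLp.homeomorphProd 2 (EuclideanSpace ℝ (Fin n)) ℝ
  have hXbar_eq : Xbar = e ⁻¹' truncatedEpigraph X f fbar := by
    rw [hXbar]
    exact Set.ext fun _ => and_assoc.symm
  have hinner : (fun p => ⟪cbar, p⟫) = Prod.snd ∘ e := by
    funext p
    simp [hcbar]
    rfl
  obtain ⟨xmin, hxmin, hmin⟩ := hXcomp.exists_isMinOn hXne hfcont.continuousOn
  have hleast : IsLeast (f '' X) (f xmin) := ⟨mem_image_of_mem f hxmin, forall_mem_image.2 hmin⟩
  have hleast_bar : IsLeast ((fun p => ⟪cbar, p⟫) '' Xbar) (f xmin) := by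
    rw [hinner, hXbar_eq, image_comp, e.image_preimage]
    exact isLeast_image_snd_truncatedEpigraph hleast (hfbar ▸ hmin hx0)
  refine ⟨hleast_bar.nonempty.of_image, ?_, ?_, f xmin, hleast, hleast_bar,
    fun p0 P hP => tendsto_inner_nearest_sub_smul_atTop hleast_bar hP⟩
  · rw [hXbar_eq, e.isCompact_preimage]
    exact isCompact_truncatedEpigraph hXcomp hfcont.continuousOn
  · rw [hXbar_eq]
    exact (ConvexOn.convex_truncatedEpigraph (hfconv.subset (subset_univ X) hXconv)).linear_preimage
      (WithLp.linearEquiv 2 ℝ _).toLinearMap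
end
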